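/- If T' is a tree obtained from a tree T by adding a new pendant vertex (a new vertex joined by an edge to an existing vertex of T), then λ(T') > λ(T), where λ denotes the largest Laplacian eigenvalue. -/

import Mathlib

open SimpleGraph Finset Matrix

/-- The degree of vertex `v`: the number of its neighbors. -/
noncomputable def gdeg {V : Type*} (G : SimpleGraph V) (v : V) : ℕ :=
  (G.neighborSet v).ncard

open scoped Classical in
/-- The Laplacian matrix `L = D - A` of a graph, with real entries. -/
noncomputable def lap {V : Type*} [Fintype V] [DecidableEq V] (G : SimpleGraph V) :
    Matrix V V ℝ :=
  Matrix.of fun u v =>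
    (if u = v then (gdeg G u : ℝ) else 0) - (if G.Adj u v then 1 else 0)

/-- `lam` is the largest Laplacian eigenvalue of `G`. -/
def IsMaxEig {V : Type*} [Fintype V] [DecidableEq V] (G : SimpleGraph V) (lam : ℝ) : Prop :=
  IsGreatest {μ : ℝ | ∃ f : V → ℝ, f ≠ 0 ∧ (lap G).mulVec f = μ • f} lam

/-- The tree obtained from `T` by attaching a new pendant vertex to `v₀ ∈ V(T)`. -/
def addLeaf {V : Type*} (T : SimpleGraph V) (v₀ : V) : SimpleGraph (Option V) :=
  SimpleGraph.fromEdgeSet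
    ({s((none : Option V), some v₀)} ∪ (Sym2.map (some : V → Option V)) '' T.edgeSet)

/-!
Colour the tree properly with two colours and let `σ = ±1` be the colour sign. For a top
Laplacian eigenvector `f`, the vector `g = σ |f|` has the same norm and a Laplacian quadratic
form at least as large, since each edge term `(f u - f v)²` becomes `(|f u| + |f v|)²`; so `g` is
again a top eigenvector. At a zero `u` of `g` the eigenvalue equation reads
`σ u · ∑_{w ~ u} |f w| = 0`, so the zero set of `g` is closed under adjacency and, the tree being
connected, `g` vanishes nowhere. Extending `g` by `0` to the new leaf adds the positive term
`g(v₀)²` to the quadratic form without changing the norm, which pushes the Rayleigh quotient on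
`T'`, hence `λ(T')`, above `λ(T)`.
-/

open scoped MatrixOrder

namespace Matrix

theorem mem_spectrum_iff_exists_mulVec_eq_smul {n K : Type*} [Fintype n] [DecidableEq n]
    [Field K] (M : Matrix n n K) (μ : K) :
    μ ∈ spectrum K M ↔ ∃ f : n → K, f ≠ 0 ∧ M *ᵥ f = μ • f := by
  rw [spectrum.mem_iff, isUnit_iff_isUnit_det, isUnit_iff_ne_zero, not_not,
    ← exists_mulVec_eq_zero_iff]
  simp [sub_mulVec, Algebra.algebraMap_eq_smul_one, smul_mulVec, sub_eq_zero, eq_comm]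

theorem dotProduct_algebraMap_sub_mulVec {n R : Type*} [Fintype n] [DecidableEq n] [CommRing R]
    (M : Matrix n n R) (r : R) (x : n → R) :
    x ⬝ᵥ (algebraMap R _ r - M) *ᵥ x = r * (x ⬝ᵥ x) - x ⬝ᵥ M *ᵥ x := by
  rw [sub_mulVec, dotProduct_sub, Algebra.algebraMap_eq_smul_one, smul_mulVec, one_mulVec,
    dotProduct_smul, smul_eq_mul]

namespace IsHermitian

variable {n : Type*} [Fintype n] [DecidableEq n] {M : Matrix n n ℝ} {r : ℝ}

theorem posSemidef_algebraMap_sub (hM : M.IsHermitian) (h : ∀ μ ∈ spectrum ℝ M, μ ≤ r) :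
    (algebraMap ℝ _ r - M).PosSemidef :=
  le_iff.1 (le_algebraMap_of_spectrum_le h hM.isSelfAdjoint)

theorem dotProduct_mulVec_le (hM : M.IsHermitian) (h : ∀ μ ∈ spectrum ℝ M, μ ≤ r)
    (x : n → ℝ) : x ⬝ᵥ M *ᵥ x ≤ r * (x ⬝ᵥ x) := by
  have := (hM.posSemidef_algebraMap_sub h).dotProduct_mulVec_nonneg x
  rw [star_trivial, dotProduct_algebraMap_sub_mulVec] at this
  linarith

theorem mulVec_eq_smul_of_dotProduct_mulVec_eq (hM : M.IsHermitian)
    (h : ∀ μ ∈ spectrum ℝ M, μ ≤ r) {x : n → ℝ} (hx : x ⬝ᵥ M *ᵥ x = r * (x ⬝ᵥ x)) :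
    M *ᵥ x = r • x := by
  have := ((hM.posSemidef_algebraMap_sub h).dotProduct_mulVec_zero_iff x).1
    (by rw [star_trivial, dotProduct_algebraMap_sub_mulVec, hx, sub_self])
  rwa [sub_mulVec, Algebra.algebraMap_eq_smul_one, smul_mulVec, one_mulVec, sub_eq_zero,
    eq_comm] at this

end IsHermitian

end Matrix

section Laplacian

variable {V : Type*} [Fintype V] [DecidableEq V] (G : SimpleGraph V) [DecidableRel G.Adj]

theorem lap_eq_lapMatrix : lap G = G.lapMatrix ℝ := by
  ext u v
  simp [lap, lapMatrix, degMatrix, adjMatrix, gdeg, diagonal, ← card_neighborFinset_eq_degree,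
    ← Set.ncard_coe_finset]

theorem isMaxEig_iff {lam : ℝ} :
    IsMaxEig G lam ↔ IsGreatest (spectrum ℝ (G.lapMatrix ℝ)) lam := by
  rw [IsMaxEig, lap_eq_lapMatrix]
  exact Iff.of_eq (congrArg (IsGreatest · lam)
    (Set.ext fun μ => (mem_spectrum_iff_exists_mulVec_eq_smul _ μ).symm))

theorem dotProduct_lapMatrix_mulVec (x : V → ℝ) :
    x ⬝ᵥ G.lapMatrix ℝ *ᵥ x = (∑ i, ∑ j, if G.Adj i j then (x i - x j) ^ 2 else 0) / 2 := by
  rw [← toLinearMap₂'_apply', lapMatrix_toLinearMap₂']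

end Laplacian

namespace SimpleGraph.Coloring

variable {V : Type*} {G : SimpleGraph V} (c : G.Coloring (Fin 2))

def sign (v : V) : ℝ := if c v = 0 then 1 else -1

theorem abs_sign (v : V) : |c.sign v| = 1 := by
  unfold sign; split_ifs <;> simp

theorem sign_eq_neg_of_adj {u v : V} (h : G.Adj u v) : c.sign v = -c.sign u := by
  have := c.valid h
  unfold sign; split_ifs <;> grind

def signedAbs (f : V → ℝ) (v : V) : ℝ := c.sign v * |f v|

theorem signedAbs_eq_zero_iff {f : V → ℝ} {v : V} : c.signedAbs f v = 0 ↔ f v = 0 := by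
  simp [signedAbs, ← abs_eq_zero (a := c.sign v), abs_sign]

variable [Fintype V]

theorem dotProduct_signedAbs_self (f : V → ℝ) : c.signedAbs f ⬝ᵥ c.signedAbs f = f ⬝ᵥ f := by
  refine Finset.sum_congr rfl fun v _ => ?_
  rw [signedAbs, mul_mul_mul_comm, ← abs_mul_abs_self (c.sign v), abs_sign, mul_one, one_mul,
    abs_mul_abs_self]

theorem dotProduct_lapMatrix_mulVec_le_signedAbs [DecidableEq V] [DecidableRel G.Adj]
    (f : V → ℝ) :
    f ⬝ᵥ G.lapMatrix ℝ *ᵥ f ≤ c.signedAbs f ⬝ᵥ G.lapMatrix ℝ *ᵥ c.signedAbs f := by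
  rw [dotProduct_lapMatrix_mulVec, dotProduct_lapMatrix_mulVec]
  gcongr with u _ v _
  split_ifs with h
  · calc (f u - f v) ^ 2 = |f u - f v| ^ 2 := (sq_abs _).symm
      _ ≤ (|f u| + |f v|) ^ 2 := by gcongr; exact abs_sub _ _
      _ = (c.signedAbs f u - c.signedAbs f v) ^ 2 := by
        rw [signedAbs, signedAbs, c.sign_eq_neg_of_adj h, neg_mul, sub_neg_eq_add, ← mul_add,
          mul_pow, ← sq_abs (c.sign u), abs_sign, one_pow, one_mul]
  · rfl

theorem eq_zero_of_adj_of_lapMatrix_mulVec_signedAbs [DecidableEq V] [DecidableRel G.Adj]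
    {f : V → ℝ} {μ : ℝ} (he : G.lapMatrix ℝ *ᵥ c.signedAbs f = μ • c.signedAbs f) {u w : V}
    (hu : f u = 0) (h : G.Adj u w) : f w = 0 := by
  have hu' : c.signedAbs f u = 0 := c.signedAbs_eq_zero_iff.2 hu
  have hrow := congrFun he u
  rw [lapMatrix_mulVec_apply, Pi.smul_apply, hu', mul_zero, smul_zero, zero_sub,
    neg_eq_zero] at hrow
  have hsum : ∑ v ∈ G.neighborFinset u, |f v| = 0 := by
    have : ∑ v ∈ G.neighborFinset u, c.signedAbs f v
        = -c.sign u * ∑ v ∈ G.neighborFinset u, |f v| := by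
      rw [Finset.mul_sum]
      refine Finset.sum_congr rfl fun v hv => ?_
      rw [signedAbs, c.sign_eq_neg_of_adj ((mem_neighborFinset G u v).1 hv)]
    rw [this, mul_eq_zero, neg_eq_zero, ← abs_eq_zero, abs_sign] at hrow
    exact hrow.resolve_left one_ne_zero
  exact abs_eq_zero.1 <| (Finset.sum_eq_zero_iff_of_nonneg fun v _ => abs_nonneg (f v)).1 hsum w
    ((mem_neighborFinset G u w).2 h)

theorem eq_zero_of_reachable_of_lapMatrix_mulVec_signedAbs [DecidableEq V] [DecidableRel G.Adj]
    {f : V → ℝ} {μ : ℝ} (he : G.lapMatrix ℝ *ᵥ c.signedAbs f = μ • c.signedAbs f) {u w : V}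
    (hu : f u = 0) (h : G.Reachable u w) : f w = 0 := by
  obtain ⟨p⟩ := h
  induction p with
  | nil => exact hu
  | cons hadj _ ih => exact ih (c.eq_zero_of_adj_of_lapMatrix_mulVec_signedAbs he hu hadj)

end SimpleGraph.Coloring

section AddLeaf

variable {V : Type*} {G : SimpleGraph V} {v₀ : V}

@[simp]
theorem addLeaf_adj_none_some {v : V} : (addLeaf G v₀).Adj none (some v) ↔ v = v₀ := by
  simp [addLeaf, Sym2.forall, eq_comm]

@[simp]
theorem addLeaf_adj_some_none {v : V} : (addLeaf G v₀).Adj (some v) none ↔ v = v₀ := by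
  simp [addLeaf, Sym2.forall]

@[simp]
theorem addLeaf_adj_some_some {u v : V} : (addLeaf G v₀).Adj (some u) (some v) ↔ G.Adj u v := by
  simp only [addLeaf, fromEdgeSet_adj, Set.mem_union, Set.mem_singleton_iff, Sym2.eq_iff,
    reduceCtorEq, false_and, and_false, Set.mem_image, Sym2.exists, mem_edgeSet, Sym2.map_mk,
    Option.some.injEq, or_false, false_or, ne_eq]
  constructor
  · rintro ⟨⟨a, b, h, ⟨rfl, rfl⟩ | ⟨rfl, rfl⟩⟩, -⟩
    exacts [h, h.symm]
  · exact fun h => ⟨⟨u, v, h, .inl ⟨rfl, rfl⟩⟩, h.ne⟩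

variable [Fintype V]

theorem dotProduct_elim_zero_self (x : V → ℝ) :
    (Option.elim · 0 x) ⬝ᵥ (Option.elim · 0 x) = x ⬝ᵥ x := by
  simp [dotProduct]

theorem dotProduct_lapMatrix_addLeaf_mulVec [DecidableEq V] [DecidableRel G.Adj]
    [DecidableRel (addLeaf G v₀).Adj] (x : V → ℝ) :
    (Option.elim · 0 x) ⬝ᵥ (addLeaf G v₀).lapMatrix ℝ *ᵥ (Option.elim · 0 x)
      = x ⬝ᵥ G.lapMatrix ℝ *ᵥ x + x v₀ ^ 2 := by
  rw [dotProduct_lapMatrix_mulVec, dotProduct_lapMatrix_mulVec]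
  simp [Fintype.sum_option, Finset.sum_add_distrib]
  ring

theorem lt_of_isMaxEig_addLeaf [DecidableEq V] [DecidableRel G.Adj] {lam lam' : ℝ} {g : V → ℝ}
    (hg : G.lapMatrix ℝ *ᵥ g = lam • g) (hg₀ : g v₀ ≠ 0) (hlam' : IsMaxEig (addLeaf G v₀) lam') :
    lam < lam' := by
  classical
  rw [isMaxEig_iff] at hlam'
  have key := ((addLeaf G v₀).isHermitian_lapMatrix ℝ).dotProduct_mulVec_le hlam'.2
    (Option.elim · 0 g)
  rw [dotProduct_lapMatrix_addLeaf_mulVec, dotProduct_elim_zero_self, hg, dotProduct_smul,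
    smul_eq_mul] at key
  have hsq : g v₀ ^ 2 ≤ g ⬝ᵥ g := by
    simpa [sq, dotProduct] using single_le_sum (fun v _ => mul_self_nonneg (g v)) (mem_univ v₀)
  nlinarith [sq_pos_of_ne_zero hg₀]

end AddLeaf

section MaxEigenvector

variable {V : Type*} [Fintype V] [DecidableEq V] {G : SimpleGraph V} [DecidableRel G.Adj]

theorem IsMaxEig.exists_lapMatrix_eigenvector_apply_ne_zero {lam : ℝ} (hlam : IsMaxEig G lam)
    (hG : G.Connected) (c : G.Coloring (Fin 2)) (v₀ : V) :
    ∃ g : V → ℝ, g v₀ ≠ 0 ∧ G.lapMatrix ℝ *ᵥ g = lam • g := by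
  rw [isMaxEig_iff] at hlam
  obtain ⟨f, hf0, hf⟩ := (mem_spectrum_iff_exists_mulVec_eq_smul _ _).1 hlam.1
  have hL := G.isHermitian_lapMatrix ℝ
  have hle : ∀ μ ∈ spectrum ℝ (G.lapMatrix ℝ), μ ≤ lam := hlam.2
  have hge : lam * (c.signedAbs f ⬝ᵥ c.signedAbs f)
      ≤ c.signedAbs f ⬝ᵥ G.lapMatrix ℝ *ᵥ c.signedAbs f :=
    calc lam * (c.signedAbs f ⬝ᵥ c.signedAbs f) = f ⬝ᵥ G.lapMatrix ℝ *ᵥ f := by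
          rw [c.dotProduct_signedAbs_self, hf, dotProduct_smul, smul_eq_mul]
      _ ≤ _ := c.dotProduct_lapMatrix_mulVec_le_signedAbs f
  have he := hL.mulVec_eq_smul_of_dotProduct_mulVec_eq hle
    (le_antisymm (hL.dotProduct_mulVec_le hle _) hge)
  refine ⟨c.signedAbs f, fun h₀ => hf0 (funext fun v => ?_), he⟩
  exact c.eq_zero_of_reachable_of_lapMatrix_mulVec_signedAbs he (c.signedAbs_eq_zero_iff.1 h₀)
    (hG.preconnected v₀ v)

end MaxEigenvector

theorem stmt18_general {V : Type*} [Fintype V] [DecidableEq V]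
    (T : SimpleGraph V) (hT : T.IsTree) (v₀ : V) (lam lam' : ℝ)
    (hlam : IsMaxEig T lam) (hlam' : IsMaxEig (addLeaf T v₀) lam') :
    lam < lam' := by
  classical
  obtain ⟨c⟩ := hT.isAcyclic.colorable_two
  obtain ⟨g, hg₀, hg⟩ := hlam.exists_lapMatrix_eigenvector_apply_ne_zero hT.connected c v₀
  exact lt_of_isMaxEig_addLeaf hg hg₀ hlam'

/-- Adding a pendant vertex to a tree strictly increases the largest Laplacian
eigenvalue. -/
theorem stmt18 {V : Type*} [Fintype V] [DecidableEq V] (hcard : 2 ≤ Fintype.card V)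
    (T : SimpleGraph V) (hT : T.IsTree) (v₀ : V) (lam lam' : ℝ)
    (hlam : IsMaxEig T lam) (hlam' : IsMaxEig (addLeaf T v₀) lam') :
    lam < lam' :=
  stmt18_general T hT v₀ lam lam' hlam hlam'
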